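/- The Poisson structures P0 and P1 of the three-degrees-of-freedom Hénon–Heiles type system are compatible: the bracket defined by the sum P0 + P1, namely {f,g}(x) = ∇f(x)ᵀ (P0 + P1(x)) ∇g(x), satisfies the Jacobi identity {f,{g,h}} + {g,{h,f}} + {h,{f,g}} = 0 for all smooth functions f,g,h on ℝ⁶. -/

import Mathlib

set_option maxHeartbeats 1000000


/- STATEMENT 2: The Poisson structures P0 and P1 of the 3-dof Hénon–Heiles type
system are compatible: the bracket of P0 + P1 satisfies the Jacobi identity. -/

noncomputable section

open Matrix

/-- partial derivative of `f` at `x` in the `i`-th coordinate direction,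
coordinates ordered as `(q1,q2,q3,p1,p2,p3)`. -/
def pd (i : Fin 6) (f : (Fin 6 → ℝ) → ℝ) (x : Fin 6 → ℝ) : ℝ :=
  fderiv ℝ f x (Pi.single i 1)

/-- gradient (∂f/∂q1,∂f/∂q2,∂f/∂q3,∂f/∂p1,∂f/∂p2,∂f/∂p3). -/
def grad (f : (Fin 6 → ℝ) → ℝ) (x : Fin 6 → ℝ) : Fin 6 → ℝ :=
  fun i => pd i f x

/-- the canonical matrix `P0 = [[0, I],[−I, 0]]`. -/
def P0 : Matrix (Fin 6) (Fin 6) ℝ :=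
  !![0, 0, 0, 1, 0, 0;
     0, 0, 0, 0, 1, 0;
     0, 0, 0, 0, 0, 1;
     -1, 0, 0, 0, 0, 0;
     0, -1, 0, 0, 0, 0;
     0, 0, -1, 0, 0, 0]

/-- The matrix `P1 = [[0, A],[−Aᵀ, B]]` with
`A = −[[q1,−1,0],[2q2,q1,q3],[q3,0,0]]`, `B = [[0,−p2,−p3],[p2,0,0],[p3,0,0]]`. -/
def P1 (x : Fin 6 → ℝ) : Matrix (Fin 6) (Fin 6) ℝ :=
  !![0, 0, 0, -(x 0), 1, 0;
     0, 0, 0, -(2 * x 1), -(x 0), -(x 2);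
     0, 0, 0, -(x 2), 0, 0;
     x 0, 2 * x 1, x 2, 0, -(x 4), -(x 5);
     -1, x 0, 0, x 4, 0, 0;
     0, x 2, 0, x 5, 0, 0]

/-- the bracket `{f,g}(x) = ∇f(x)ᵀ (P0 + P1(x)) ∇g(x)`. -/
def pbSum (f g : (Fin 6 → ℝ) → ℝ) (x : Fin 6 → ℝ) : ℝ :=
  grad f x ⬝ᵥ (P0 + P1 x).mulVec (grad g x)

lemma contDiff_pd (i : Fin 6) {f : (Fin 6 → ℝ) → ℝ} (hf : ContDiff ℝ (⊤ : ℕ∞) f) :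
    ContDiff ℝ (⊤ : ℕ∞) (pd i f) := by
  have : pd i f = fun x => fderiv ℝ f x (Pi.single i 1) := rfl
  rw [this]
  exact (hf.fderiv_right (by simp)).clm_apply contDiff_const

lemma pd_comm {f : (Fin 6 → ℝ) → ℝ} (hf : ContDiff ℝ (⊤ : ℕ∞) f) (i j : Fin 6) (x : Fin 6 → ℝ) :
    pd i (pd j f) x = pd j (pd i f) x := by
  have hsym := (hf.contDiffAt (x := x)).isSymmSndFDerivAt (by simp [minSmoothness_of_isRCLikeNormedField]; exact WithTop.coe_le_coe.mpr (le_top : (2 : ℕ∞) ≤ ⊤))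
  have hdf : DifferentiableAt ℝ (fderiv ℝ f) x :=
    ((hf.fderiv_right (m := (⊤ : ℕ∞)) (by simp)).differentiable (by simp)).differentiableAt
  have key : ∀ a b : Fin 6,
      pd a (pd b f) x = fderiv ℝ (fderiv ℝ f) x (Pi.single a 1) (Pi.single b 1) := by
    intro a b
    have : pd b f = fun y => (fderiv ℝ f y) (Pi.single b 1) := rfl
    rw [pd, this, fderiv_clm_apply hdf (differentiableAt_const _)]
    simp
  rw [key, key, hsym]

lemma pbSum_eq (f g : (Fin 6 → ℝ) → ℝ) (y : Fin 6 → ℝ) :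
    pbSum f g y = (1 - y 0) * pd 0 f y * pd 3 g y + 1 * pd 0 f y * pd 4 g y + (-(2 * y 1)) * pd 1 f y * pd 3 g y + (1 - y 0) * pd 1 f y * pd 4 g y + (-(y 2)) * pd 1 f y * pd 5 g y + (-(y 2)) * pd 2 f y * pd 3 g y + 1 * pd 2 f y * pd 5 g y + (y 0 - 1) * pd 3 f y * pd 0 g y + (2 * y 1) * pd 3 f y * pd 1 g y + (y 2) * pd 3 f y * pd 2 g y + (-(y 4)) * pd 3 f y * pd 4 g y + (-(y 5)) * pd 3 f y * pd 5 g y + (-1) * pd 4 f y * pd 0 g y + (y 0 - 1) * pd 4 f y * pd 1 g y + (y 4) * pd 4 f y * pd 3 g y + (y 2) * pd 5 f y * pd 1 g y + (-1) * pd 5 f y * pd 2 g y + (y 5) * pd 5 f y * pd 3 g y := by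
  simp only [pbSum, grad, Matrix.mulVec, dotProduct, Fin.sum_univ_six, Matrix.add_apply, show P0 0 0 = (0:ℝ) from rfl, show P1 y 0 0 = (0:ℝ) from rfl, show P0 0 1 = (0:ℝ) from rfl, show P1 y 0 1 = (0:ℝ) from rfl, show P0 0 2 = (0:ℝ) from rfl, show P1 y 0 2 = (0:ℝ) from rfl, show P0 0 3 = (1:ℝ) from rfl, show P1 y 0 3 = (-(y 0):ℝ) from rfl, show P0 0 4 = (0:ℝ) from rfl, show P1 y 0 4 = (1:ℝ) from rfl, show P0 0 5 = (0:ℝ) from rfl, show P1 y 0 5 = (0:ℝ) from rfl, show P0 1 0 = (0:ℝ) from rfl, show P1 y 1 0 = (0:ℝ) from rfl, show P0 1 1 = (0:ℝ) from rfl, show P1 y 1 1 = (0:ℝ) from rfl, show P0 1 2 = (0:ℝ) from rfl, show P1 y 1 2 = (0:ℝ) from rfl, show P0 1 3 = (0:ℝ) from rfl, show P1 y 1 3 = (-(2 * y 1):ℝ) from rfl, show P0 1 4 = (1:ℝ) from rfl, show P1 y 1 4 = (-(y 0):ℝ) from rfl, show P0 1 5 = (0:ℝ) from rfl, show P1 y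 1 5 = (-(y 2):ℝ) from rfl, show P0 2 0 = (0:ℝ) from rfl, show P1 y 2 0 = (0:ℝ) from rfl, show P0 2 1 = (0:ℝ) from rfl, show P1 y 2 1 = (0:ℝ) from rfl, show P0 2 2 = (0:ℝ) from rfl, show P1 y 2 2 = (0:ℝ) from rfl, show P0 2 3 = (0:ℝ) from rfl, show P1 y 2 3 = (-(y 2):ℝ) from rfl, show P0 2 4 = (0:ℝ) from rfl, show P1 y 2 4 = (0:ℝ) from rfl, show P0 2 5 = (1:ℝ) from rfl, show P1 y 2 5 = (0:ℝ) from rfl, show P0 3 0 = (-1:ℝ) from rfl, show P1 y 3 0 = (y 0:ℝ) from rfl, show P0 3 1 = (0:ℝ) from rfl, show P1 y 3 1 = (2 * y 1:ℝ) from rfl, show P0 3 2 = (0:ℝ) from rfl, show P1 y 3 2 = (y 2:ℝ) from rfl, show P0 3 3 = (0:ℝ) from rfl, show P1 y 3 3 = (0:ℝ) from rfl, show P0 3 4 = (0:ℝ) from rfl, show P1 y 3 4 = (-(y 4):ℝ) from rfl, show P0 3 5 = (0:ℝ) from rfl, show P1 y 3 5 = (-(y 5):ℝ) from rfl, show P0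 4 0 = (0:ℝ) from rfl, show P1 y 4 0 = (-1:ℝ) from rfl, show P0 4 1 = (-1:ℝ) from rfl, show P1 y 4 1 = (y 0:ℝ) from rfl, show P0 4 2 = (0:ℝ) from rfl, show P1 y 4 2 = (0:ℝ) from rfl, show P0 4 3 = (0:ℝ) from rfl, show P1 y 4 3 = (y 4:ℝ) from rfl, show P0 4 4 = (0:ℝ) from rfl, show P1 y 4 4 = (0:ℝ) from rfl, show P0 4 5 = (0:ℝ) from rfl, show P1 y 4 5 = (0:ℝ) from rfl, show P0 5 0 = (0:ℝ) from rfl, show P1 y 5 0 = (0:ℝ) from rfl, show P0 5 1 = (0:ℝ) from rfl, show P1 y 5 1 = (y 2:ℝ) from rfl, show P0 5 2 = (-1:ℝ) from rfl, show P1 y 5 2 = (0:ℝ) from rfl, show P0 5 3 = (0:ℝ) from rfl, show P1 y 5 3 = (y 5:ℝ) from rfl, show P0 5 4 = (0:ℝ) from rfl, show P1 y 5 4 = (0:ℝ) from rfl, show P0 5 5 = (0:ℝ) from rfl, show P1 y 5 5 = (0:ℝ) from rfl]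
  ring

section pdcalc
variable {a b : (Fin 6 → ℝ) → ℝ} {x : Fin 6 → ℝ} {j m : Fin 6} {c : ℝ}

lemma pd_add (ha : DifferentiableAt ℝ a x) (hb : DifferentiableAt ℝ b x) :
    pd j (fun y => a y + b y) x = pd j a x + pd j b x := by
  simp [pd, fderiv_fun_add ha hb]

lemma pd_mul (ha : DifferentiableAt ℝ a x) (hb : DifferentiableAt ℝ b x) :
    pd j (fun y => a y * b y) x = pd j a x * b x + a x * pd j b x := by
  simp [pd, fderiv_fun_mul ha hb]; ring

lemma pd_const : pd j (fun _ => c) x = 0 := by simp [pd]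

lemma pd_coord : pd j (fun y => y m) x = if j = m then 1 else 0 := by
  have : (fun y : Fin 6 → ℝ => y m) = (ContinuousLinearMap.proj (R := ℝ) (φ := fun _ : Fin 6 => ℝ) m) := rfl
  rw [pd, this, ContinuousLinearMap.fderiv]
  simp [Pi.single_apply, eq_comm]

lemma pd_sub (ha : DifferentiableAt ℝ a x) (hb : DifferentiableAt ℝ b x) :
    pd j (fun y => a y - b y) x = pd j a x - pd j b x := by
  simp [pd, fderiv_fun_sub ha hb]

lemma pd_neg : pd j (fun y => -(a y)) x = -(pd j a x) := by
  simp [pd, fderiv_neg]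

lemma pd_const_mul (ha : DifferentiableAt ℝ a x) :
    pd j (fun y => c * a y) x = c * pd j a x := by
  simp [pd, fderiv_const_mul ha]

lemma pd_const_sub (ha : DifferentiableAt ℝ a x) :
    pd j (fun y => c - a y) x = -(pd j a x) := by
  simp [pd, fderiv_fun_sub (differentiableAt_const _) ha]

lemma pd_sub_const (ha : DifferentiableAt ℝ a x) :
    pd j (fun y => a y - c) x = pd j a x := by
  simp [pd, fderiv_sub_const]

end pdcalc

lemma pd_pbSum {g h : (Fin 6 → ℝ) → ℝ} (hg : ContDiff ℝ (⊤ : ℕ∞) g) (hh : ContDiff ℝ (⊤ : ℕ∞) h)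
    (j : Fin 6) (x : Fin 6 → ℝ) :
    pd j (pbSum g h) x =
      ((-(if j = 0 then (1:ℝ) else 0)) * pd 0 g x * pd 3 h x + (1 - x 0) * (pd j (pd 0 g) x * pd 3 h x + pd 0 g x * pd j (pd 3 h) x))
      + (0 * pd 0 g x * pd 4 h x + 1 * (pd j (pd 0 g) x * pd 4 h x + pd 0 g x * pd j (pd 4 h) x))
      + ((-(2 * (if j = 1 then (1:ℝ) else 0))) * pd 1 g x * pd 3 h x + (-(2 * x 1)) * (pd j (pd 1 g) x * pd 3 h x + pd 1 g x * pd j (pd 3 h) x))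
      + ((-(if j = 0 then (1:ℝ) else 0)) * pd 1 g x * pd 4 h x + (1 - x 0) * (pd j (pd 1 g) x * pd 4 h x + pd 1 g x * pd j (pd 4 h) x))
      + ((-(if j = 2 then (1:ℝ) else 0)) * pd 1 g x * pd 5 h x + (-(x 2)) * (pd j (pd 1 g) x * pd 5 h x + pd 1 g x * pd j (pd 5 h) x))
      + ((-(if j = 2 then (1:ℝ) else 0)) * pd 2 g x * pd 3 h x + (-(x 2)) * (pd j (pd 2 g) x * pd 3 h x + pd 2 g x * pd j (pd 3 h) x))
      + (0 * pd 2 g x * pd 5 h x + 1 * (pd j (pd 2 g) x * pd 5 h x + pd 2 g x * pd j (pd 5 h) x))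
      + ((if j = 0 then (1:ℝ) else 0) * pd 3 g x * pd 0 h x + (x 0 - 1) * (pd j (pd 3 g) x * pd 0 h x + pd 3 g x * pd j (pd 0 h) x))
      + ((2 * (if j = 1 then (1:ℝ) else 0)) * pd 3 g x * pd 1 h x + (2 * x 1) * (pd j (pd 3 g) x * pd 1 h x + pd 3 g x * pd j (pd 1 h) x))
      + ((if j = 2 then (1:ℝ) else 0) * pd 3 g x * pd 2 h x + (x 2) * (pd j (pd 3 g) x * pd 2 h x + pd 3 g x * pd j (pd 2 h) x))
      + ((-(if j = 4 then (1:ℝ) else 0)) * pd 3 g x * pd 4 h x + (-(x 4)) * (pd j (pd 3 g) x * pd 4 h x + pd 3 g x * pd j (pd 4 h) x))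
      + ((-(if j = 5 then (1:ℝ) else 0)) * pd 3 g x * pd 5 h x + (-(x 5)) * (pd j (pd 3 g) x * pd 5 h x + pd 3 g x * pd j (pd 5 h) x))
      + (0 * pd 4 g x * pd 0 h x + (-1) * (pd j (pd 4 g) x * pd 0 h x + pd 4 g x * pd j (pd 0 h) x))
      + ((if j = 0 then (1:ℝ) else 0) * pd 4 g x * pd 1 h x + (x 0 - 1) * (pd j (pd 4 g) x * pd 1 h x + pd 4 g x * pd j (pd 1 h) x))
      + ((if j = 4 then (1:ℝ) else 0) * pd 4 g x * pd 3 h x + (x 4) * (pd j (pd 4 g) x * pd 3 h x + pd 4 g x * pd j (pd 3 h) x))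
      + ((if j = 2 then (1:ℝ) else 0) * pd 5 g x * pd 1 h x + (x 2) * (pd j (pd 5 g) x * pd 1 h x + pd 5 g x * pd j (pd 1 h) x))
      + (0 * pd 5 g x * pd 2 h x + (-1) * (pd j (pd 5 g) x * pd 2 h x + pd 5 g x * pd j (pd 2 h) x))
      + ((if j = 5 then (1:ℝ) else 0) * pd 5 g x * pd 3 h x + (x 5) * (pd j (pd 5 g) x * pd 3 h x + pd 5 g x * pd j (pd 3 h) x)) := by
  have hDg : ∀ k : Fin 6, Differentiable ℝ (pd k g) :=
    fun k => (contDiff_pd k hg).differentiable (by simp)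
  have hDh : ∀ k : Fin 6, Differentiable ℝ (pd k h) :=
    fun k => (contDiff_pd k hh).differentiable (by simp)
  have e : pbSum g h = fun y => (1 - y 0) * pd 0 g y * pd 3 h y + 1 * pd 0 g y * pd 4 h y + (-(2 * y 1)) * pd 1 g y * pd 3 h y + (1 - y 0) * pd 1 g y * pd 4 h y + (-(y 2)) * pd 1 g y * pd 5 h y + (-(y 2)) * pd 2 g y * pd 3 h y + 1 * pd 2 g y * pd 5 h y + (y 0 - 1) * pd 3 g y * pd 0 h y + (2 * y 1) * pd 3 g y * pd 1 h y + (y 2) * pd 3 g y * pd 2 h y + (-(y 4)) * pd 3 g y * pd 4 h y + (-(y 5)) * pd 3 g y * pd 5 h y + (-1) * pd 4 g y * pd 0 h y + (y 0 - 1) * pd 4 g y * pd 1 h y + (y 4) * pd 4 g y * pd 3 h y + (y 2) * pd 5 g y * pd 1 h y + (-1) * pd 5 g y * pd 2 h y + (y 5) * pd 5 g y * pd 3 h y := funext fun y => pbSum_eq g h y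
  rw [e]
  simp (disch := fun_prop) only [pd_add, pd_mul, pd_sub, pd_neg, pd_const, pd_coord, pd_const_mul, pd_const_sub, pd_sub_const]
  ring

lemma pd_pbSum_0 {g h : (Fin 6 → ℝ) → ℝ} (hg : ContDiff ℝ (⊤ : ℕ∞) g) (hh : ContDiff ℝ (⊤ : ℕ∞) h)
    (x : Fin 6 → ℝ) :
    pd 0 (pbSum g h) x =
        (-1) * pd 0 g x * pd 3 h x
        + (1 - x 0) * (pd 0 (pd 0 g) x * pd 3 h x + pd 0 g x * pd 0 (pd 3 h) x)
        + 1 * (pd 0 (pd 0 g) x * pd 4 h x + pd 0 g x * pd 0 (pd 4 h) x)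
        + (-(2 * x 1)) * (pd 0 (pd 1 g) x * pd 3 h x + pd 1 g x * pd 0 (pd 3 h) x)
        + (-1) * pd 1 g x * pd 4 h x
        + (1 - x 0) * (pd 0 (pd 1 g) x * pd 4 h x + pd 1 g x * pd 0 (pd 4 h) x)
        + (-(x 2)) * (pd 0 (pd 1 g) x * pd 5 h x + pd 1 g x * pd 0 (pd 5 h) x)
        + (-(x 2)) * (pd 0 (pd 2 g) x * pd 3 h x + pd 2 g x * pd 0 (pd 3 h) x)
        + 1 * (pd 0 (pd 2 g) x * pd 5 h x + pd 2 g x * pd 0 (pd 5 h) x)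
        + (1) * pd 3 g x * pd 0 h x
        + (x 0 - 1) * (pd 0 (pd 3 g) x * pd 0 h x + pd 3 g x * pd 0 (pd 0 h) x)
        + (2 * x 1) * (pd 0 (pd 3 g) x * pd 1 h x + pd 3 g x * pd 0 (pd 1 h) x)
        + (x 2) * (pd 0 (pd 3 g) x * pd 2 h x + pd 3 g x * pd 0 (pd 2 h) x)
        + (-(x 4)) * (pd 0 (pd 3 g) x * pd 4 h x + pd 3 g x * pd 0 (pd 4 h) x)
        + (-(x 5)) * (pd 0 (pd 3 g) x * pd 5 h x + pd 3 g x * pd 0 (pd 5 h) x)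
        + (-1) * (pd 0 (pd 4 g) x * pd 0 h x + pd 4 g x * pd 0 (pd 0 h) x)
        + (1) * pd 4 g x * pd 1 h x
        + (x 0 - 1) * (pd 0 (pd 4 g) x * pd 1 h x + pd 4 g x * pd 0 (pd 1 h) x)
        + (x 4) * (pd 0 (pd 4 g) x * pd 3 h x + pd 4 g x * pd 0 (pd 3 h) x)
        + (x 2) * (pd 0 (pd 5 g) x * pd 1 h x + pd 5 g x * pd 0 (pd 1 h) x)
        + (-1) * (pd 0 (pd 5 g) x * pd 2 h x + pd 5 g x * pd 0 (pd 2 h) x)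
        + (x 5) * (pd 0 (pd 5 g) x * pd 3 h x + pd 5 g x * pd 0 (pd 3 h) x) := by
  rw [pd_pbSum hg hh 0 x]
  simp only [show ((0:Fin 6) = 0) = True from eq_true rfl, show ((0:Fin 6) = 1) = False from eq_false (by decide), show ((0:Fin 6) = 2) = False from eq_false (by decide), show ((0:Fin 6) = 4) = False from eq_false (by decide), show ((0:Fin 6) = 5) = False from eq_false (by decide), if_true, if_false]
  try simp only [pd_comm hg 1 0 x, pd_comm hg 2 0 x, pd_comm hg 2 1 x, pd_comm hg 3 0 x, pd_comm hg 3 1 x, pd_comm hg 3 2 x, pd_comm hg 4 0 x, pd_comm hg 4 1 x, pd_comm hg 4 2 x, pd_comm hg 4 3 x, pd_comm hg 5 0 x, pd_comm hg 5 1 x, pd_comm hg 5 2 x, pd_comm hg 5 3 x, pd_comm hg 5 4 x, pd_comm hh 1 0 x, pd_comm hh 2 0 x, pd_comm hh 2 1 x, pd_comm hh 3 0 x, pd_comm hh 3 1 x, pd_comm hh 3 2 x, pd_comm hh 4 0 x, pd_comm hh 4 1 x, pd_comm hh 4 2 x, pd_comm hh 4 3 x, pd_comm hh 5 0 x, pd_comm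 hh 5 1 x, pd_comm hh 5 2 x, pd_comm hh 5 3 x, pd_comm hh 5 4 x]
  ring

lemma pd_pbSum_1 {g h : (Fin 6 → ℝ) → ℝ} (hg : ContDiff ℝ (⊤ : ℕ∞) g) (hh : ContDiff ℝ (⊤ : ℕ∞) h)
    (x : Fin 6 → ℝ) :
    pd 1 (pbSum g h) x =
        (1 - x 0) * (pd 0 (pd 1 g) x * pd 3 h x + pd 0 g x * pd 1 (pd 3 h) x)
        + 1 * (pd 0 (pd 1 g) x * pd 4 h x + pd 0 g x * pd 1 (pd 4 h) x)
        + (-2) * pd 1 g x * pd 3 h x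
        + (-(2 * x 1)) * (pd 1 (pd 1 g) x * pd 3 h x + pd 1 g x * pd 1 (pd 3 h) x)
        + (1 - x 0) * (pd 1 (pd 1 g) x * pd 4 h x + pd 1 g x * pd 1 (pd 4 h) x)
        + (-(x 2)) * (pd 1 (pd 1 g) x * pd 5 h x + pd 1 g x * pd 1 (pd 5 h) x)
        + (-(x 2)) * (pd 1 (pd 2 g) x * pd 3 h x + pd 2 g x * pd 1 (pd 3 h) x)
        + 1 * (pd 1 (pd 2 g) x * pd 5 h x + pd 2 g x * pd 1 (pd 5 h) x)
        + (x 0 - 1) * (pd 1 (pd 3 g) x * pd 0 h x + pd 3 g x * pd 0 (pd 1 h) x)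
        + (2) * pd 3 g x * pd 1 h x
        + (2 * x 1) * (pd 1 (pd 3 g) x * pd 1 h x + pd 3 g x * pd 1 (pd 1 h) x)
        + (x 2) * (pd 1 (pd 3 g) x * pd 2 h x + pd 3 g x * pd 1 (pd 2 h) x)
        + (-(x 4)) * (pd 1 (pd 3 g) x * pd 4 h x + pd 3 g x * pd 1 (pd 4 h) x)
        + (-(x 5)) * (pd 1 (pd 3 g) x * pd 5 h x + pd 3 g x * pd 1 (pd 5 h) x)
        + (-1) * (pd 1 (pd 4 g) x * pd 0 h x + pd 4 g x * pd 0 (pd 1 h) x)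
        + (x 0 - 1) * (pd 1 (pd 4 g) x * pd 1 h x + pd 4 g x * pd 1 (pd 1 h) x)
        + (x 4) * (pd 1 (pd 4 g) x * pd 3 h x + pd 4 g x * pd 1 (pd 3 h) x)
        + (x 2) * (pd 1 (pd 5 g) x * pd 1 h x + pd 5 g x * pd 1 (pd 1 h) x)
        + (-1) * (pd 1 (pd 5 g) x * pd 2 h x + pd 5 g x * pd 1 (pd 2 h) x)
        + (x 5) * (pd 1 (pd 5 g) x * pd 3 h x + pd 5 g x * pd 1 (pd 3 h) x) := by
  rw [pd_pbSum hg hh 1 x]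
  simp only [show ((1:Fin 6) = 0) = False from eq_false (by decide), show ((1:Fin 6) = 1) = True from eq_true rfl, show ((1:Fin 6) = 2) = False from eq_false (by decide), show ((1:Fin 6) = 4) = False from eq_false (by decide), show ((1:Fin 6) = 5) = False from eq_false (by decide), if_true, if_false]
  try simp only [pd_comm hg 1 0 x, pd_comm hg 2 0 x, pd_comm hg 2 1 x, pd_comm hg 3 0 x, pd_comm hg 3 1 x, pd_comm hg 3 2 x, pd_comm hg 4 0 x, pd_comm hg 4 1 x, pd_comm hg 4 2 x, pd_comm hg 4 3 x, pd_comm hg 5 0 x, pd_comm hg 5 1 x, pd_comm hg 5 2 x, pd_comm hg 5 3 x, pd_comm hg 5 4 x, pd_comm hh 1 0 x, pd_comm hh 2 0 x, pd_comm hh 2 1 x, pd_comm hh 3 0 x, pd_comm hh 3 1 x, pd_comm hh 3 2 x, pd_comm hh 4 0 x, pd_comm hh 4 1 x, pd_comm hh 4 2 x, pd_comm hh 4 3 x, pd_comm hh 5 0 x, pd_comm hh 5 1 x, pd_comm hh 5 2 x, pd_comm hh 5 3 x, pd_comm hh 5 4 x]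
  ring

lemma pd_pbSum_2 {g h : (Fin 6 → ℝ) → ℝ} (hg : ContDiff ℝ (⊤ : ℕ∞) g) (hh : ContDiff ℝ (⊤ : ℕ∞) h)
    (x : Fin 6 → ℝ) :
    pd 2 (pbSum g h) x =
        (1 - x 0) * (pd 0 (pd 2 g) x * pd 3 h x + pd 0 g x * pd 2 (pd 3 h) x)
        + 1 * (pd 0 (pd 2 g) x * pd 4 h x + pd 0 g x * pd 2 (pd 4 h) x)
        + (-(2 * x 1)) * (pd 1 (pd 2 g) x * pd 3 h x + pd 1 g x * pd 2 (pd 3 h) x)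
        + (1 - x 0) * (pd 1 (pd 2 g) x * pd 4 h x + pd 1 g x * pd 2 (pd 4 h) x)
        + (-1) * pd 1 g x * pd 5 h x
        + (-(x 2)) * (pd 1 (pd 2 g) x * pd 5 h x + pd 1 g x * pd 2 (pd 5 h) x)
        + (-1) * pd 2 g x * pd 3 h x
        + (-(x 2)) * (pd 2 (pd 2 g) x * pd 3 h x + pd 2 g x * pd 2 (pd 3 h) x)
        + 1 * (pd 2 (pd 2 g) x * pd 5 h x + pd 2 g x * pd 2 (pd 5 h) x)
        + (x 0 - 1) * (pd 2 (pd 3 g) x * pd 0 h x + pd 3 g x * pd 0 (pd 2 h) x)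
        + (2 * x 1) * (pd 2 (pd 3 g) x * pd 1 h x + pd 3 g x * pd 1 (pd 2 h) x)
        + (1) * pd 3 g x * pd 2 h x
        + (x 2) * (pd 2 (pd 3 g) x * pd 2 h x + pd 3 g x * pd 2 (pd 2 h) x)
        + (-(x 4)) * (pd 2 (pd 3 g) x * pd 4 h x + pd 3 g x * pd 2 (pd 4 h) x)
        + (-(x 5)) * (pd 2 (pd 3 g) x * pd 5 h x + pd 3 g x * pd 2 (pd 5 h) x)
        + (-1) * (pd 2 (pd 4 g) x * pd 0 h x + pd 4 g x * pd 0 (pd 2 h) x)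
        + (x 0 - 1) * (pd 2 (pd 4 g) x * pd 1 h x + pd 4 g x * pd 1 (pd 2 h) x)
        + (x 4) * (pd 2 (pd 4 g) x * pd 3 h x + pd 4 g x * pd 2 (pd 3 h) x)
        + (1) * pd 5 g x * pd 1 h x
        + (x 2) * (pd 2 (pd 5 g) x * pd 1 h x + pd 5 g x * pd 1 (pd 2 h) x)
        + (-1) * (pd 2 (pd 5 g) x * pd 2 h x + pd 5 g x * pd 2 (pd 2 h) x)
        + (x 5) * (pd 2 (pd 5 g) x * pd 3 h x + pd 5 g x * pd 2 (pd 3 h) x) := by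
  rw [pd_pbSum hg hh 2 x]
  simp only [show ((2:Fin 6) = 0) = False from eq_false (by decide), show ((2:Fin 6) = 1) = False from eq_false (by decide), show ((2:Fin 6) = 2) = True from eq_true rfl, show ((2:Fin 6) = 4) = False from eq_false (by decide), show ((2:Fin 6) = 5) = False from eq_false (by decide), if_true, if_false]
  try simp only [pd_comm hg 1 0 x, pd_comm hg 2 0 x, pd_comm hg 2 1 x, pd_comm hg 3 0 x, pd_comm hg 3 1 x, pd_comm hg 3 2 x, pd_comm hg 4 0 x, pd_comm hg 4 1 x, pd_comm hg 4 2 x, pd_comm hg 4 3 x, pd_comm hg 5 0 x, pd_comm hg 5 1 x, pd_comm hg 5 2 x, pd_comm hg 5 3 x, pd_comm hg 5 4 x, pd_comm hh 1 0 x, pd_comm hh 2 0 x, pd_comm hh 2 1 x, pd_comm hh 3 0 x, pd_comm hh 3 1 x, pd_comm hh 3 2 x, pd_comm hh 4 0 x, pd_comm hh 4 1 x, pd_comm hh 4 2 x, pd_comm hh 4 3 x, pd_comm hh 5 0 x, pd_comm hh 5 1 x, pd_comm hh 5 2 x, pd_comm hh 5 3 x, pd_comm hh 5 4 x]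
  ring

lemma pd_pbSum_3 {g h : (Fin 6 → ℝ) → ℝ} (hg : ContDiff ℝ (⊤ : ℕ∞) g) (hh : ContDiff ℝ (⊤ : ℕ∞) h)
    (x : Fin 6 → ℝ) :
    pd 3 (pbSum g h) x =
        (1 - x 0) * (pd 0 (pd 3 g) x * pd 3 h x + pd 0 g x * pd 3 (pd 3 h) x)
        + 1 * (pd 0 (pd 3 g) x * pd 4 h x + pd 0 g x * pd 3 (pd 4 h) x)
        + (-(2 * x 1)) * (pd 1 (pd 3 g) x * pd 3 h x + pd 1 g x * pd 3 (pd 3 h) x)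
        + (1 - x 0) * (pd 1 (pd 3 g) x * pd 4 h x + pd 1 g x * pd 3 (pd 4 h) x)
        + (-(x 2)) * (pd 1 (pd 3 g) x * pd 5 h x + pd 1 g x * pd 3 (pd 5 h) x)
        + (-(x 2)) * (pd 2 (pd 3 g) x * pd 3 h x + pd 2 g x * pd 3 (pd 3 h) x)
        + 1 * (pd 2 (pd 3 g) x * pd 5 h x + pd 2 g x * pd 3 (pd 5 h) x)
        + (x 0 - 1) * (pd 3 (pd 3 g) x * pd 0 h x + pd 3 g x * pd 0 (pd 3 h) x)
        + (2 * x 1) * (pd 3 (pd 3 g) x * pd 1 h x + pd 3 g x * pd 1 (pd 3 h) x)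
        + (x 2) * (pd 3 (pd 3 g) x * pd 2 h x + pd 3 g x * pd 2 (pd 3 h) x)
        + (-(x 4)) * (pd 3 (pd 3 g) x * pd 4 h x + pd 3 g x * pd 3 (pd 4 h) x)
        + (-(x 5)) * (pd 3 (pd 3 g) x * pd 5 h x + pd 3 g x * pd 3 (pd 5 h) x)
        + (-1) * (pd 3 (pd 4 g) x * pd 0 h x + pd 4 g x * pd 0 (pd 3 h) x)
        + (x 0 - 1) * (pd 3 (pd 4 g) x * pd 1 h x + pd 4 g x * pd 1 (pd 3 h) x)
        + (x 4) * (pd 3 (pd 4 g) x * pd 3 h x + pd 4 g x * pd 3 (pd 3 h) x)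
        + (x 2) * (pd 3 (pd 5 g) x * pd 1 h x + pd 5 g x * pd 1 (pd 3 h) x)
        + (-1) * (pd 3 (pd 5 g) x * pd 2 h x + pd 5 g x * pd 2 (pd 3 h) x)
        + (x 5) * (pd 3 (pd 5 g) x * pd 3 h x + pd 5 g x * pd 3 (pd 3 h) x) := by
  rw [pd_pbSum hg hh 3 x]
  simp only [show ((3:Fin 6) = 0) = False from eq_false (by decide), show ((3:Fin 6) = 1) = False from eq_false (by decide), show ((3:Fin 6) = 2) = False from eq_false (by decide), show ((3:Fin 6) = 4) = False from eq_false (by decide), show ((3:Fin 6) = 5) = False from eq_false (by decide), if_true, if_false]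
  try simp only [pd_comm hg 1 0 x, pd_comm hg 2 0 x, pd_comm hg 2 1 x, pd_comm hg 3 0 x, pd_comm hg 3 1 x, pd_comm hg 3 2 x, pd_comm hg 4 0 x, pd_comm hg 4 1 x, pd_comm hg 4 2 x, pd_comm hg 4 3 x, pd_comm hg 5 0 x, pd_comm hg 5 1 x, pd_comm hg 5 2 x, pd_comm hg 5 3 x, pd_comm hg 5 4 x, pd_comm hh 1 0 x, pd_comm hh 2 0 x, pd_comm hh 2 1 x, pd_comm hh 3 0 x, pd_comm hh 3 1 x, pd_comm hh 3 2 x, pd_comm hh 4 0 x, pd_comm hh 4 1 x, pd_comm hh 4 2 x, pd_comm hh 4 3 x, pd_comm hh 5 0 x, pd_comm hh 5 1 x, pd_comm hh 5 2 x, pd_comm hh 5 3 x, pd_comm hh 5 4 x]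
  ring

lemma pd_pbSum_4 {g h : (Fin 6 → ℝ) → ℝ} (hg : ContDiff ℝ (⊤ : ℕ∞) g) (hh : ContDiff ℝ (⊤ : ℕ∞) h)
    (x : Fin 6 → ℝ) :
    pd 4 (pbSum g h) x =
        (1 - x 0) * (pd 0 (pd 4 g) x * pd 3 h x + pd 0 g x * pd 3 (pd 4 h) x)
        + 1 * (pd 0 (pd 4 g) x * pd 4 h x + pd 0 g x * pd 4 (pd 4 h) x)
        + (-(2 * x 1)) * (pd 1 (pd 4 g) x * pd 3 h x + pd 1 g x * pd 3 (pd 4 h) x)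
        + (1 - x 0) * (pd 1 (pd 4 g) x * pd 4 h x + pd 1 g x * pd 4 (pd 4 h) x)
        + (-(x 2)) * (pd 1 (pd 4 g) x * pd 5 h x + pd 1 g x * pd 4 (pd 5 h) x)
        + (-(x 2)) * (pd 2 (pd 4 g) x * pd 3 h x + pd 2 g x * pd 3 (pd 4 h) x)
        + 1 * (pd 2 (pd 4 g) x * pd 5 h x + pd 2 g x * pd 4 (pd 5 h) x)
        + (x 0 - 1) * (pd 3 (pd 4 g) x * pd 0 h x + pd 3 g x * pd 0 (pd 4 h) x)
        + (2 * x 1) * (pd 3 (pd 4 g) x * pd 1 h x + pd 3 g x * pd 1 (pd 4 h) x)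
        + (x 2) * (pd 3 (pd 4 g) x * pd 2 h x + pd 3 g x * pd 2 (pd 4 h) x)
        + (-1) * pd 3 g x * pd 4 h x
        + (-(x 4)) * (pd 3 (pd 4 g) x * pd 4 h x + pd 3 g x * pd 4 (pd 4 h) x)
        + (-(x 5)) * (pd 3 (pd 4 g) x * pd 5 h x + pd 3 g x * pd 4 (pd 5 h) x)
        + (-1) * (pd 4 (pd 4 g) x * pd 0 h x + pd 4 g x * pd 0 (pd 4 h) x)
        + (x 0 - 1) * (pd 4 (pd 4 g) x * pd 1 h x + pd 4 g x * pd 1 (pd 4 h) x)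
        + (1) * pd 4 g x * pd 3 h x
        + (x 4) * (pd 4 (pd 4 g) x * pd 3 h x + pd 4 g x * pd 3 (pd 4 h) x)
        + (x 2) * (pd 4 (pd 5 g) x * pd 1 h x + pd 5 g x * pd 1 (pd 4 h) x)
        + (-1) * (pd 4 (pd 5 g) x * pd 2 h x + pd 5 g x * pd 2 (pd 4 h) x)
        + (x 5) * (pd 4 (pd 5 g) x * pd 3 h x + pd 5 g x * pd 3 (pd 4 h) x) := by
  rw [pd_pbSum hg hh 4 x]
  simp only [show ((4:Fin 6) = 0) = False from eq_false (by decide), show ((4:Fin 6) = 1) = False from eq_false (by decide), show ((4:Fin 6) = 2) = False from eq_false (by decide), show ((4:Fin 6) = 4) = True from eq_true rfl, show ((4:Fin 6) = 5) = False from eq_false (by decide), if_true, if_false]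
  try simp only [pd_comm hg 1 0 x, pd_comm hg 2 0 x, pd_comm hg 2 1 x, pd_comm hg 3 0 x, pd_comm hg 3 1 x, pd_comm hg 3 2 x, pd_comm hg 4 0 x, pd_comm hg 4 1 x, pd_comm hg 4 2 x, pd_comm hg 4 3 x, pd_comm hg 5 0 x, pd_comm hg 5 1 x, pd_comm hg 5 2 x, pd_comm hg 5 3 x, pd_comm hg 5 4 x, pd_comm hh 1 0 x, pd_comm hh 2 0 x, pd_comm hh 2 1 x, pd_comm hh 3 0 x, pd_comm hh 3 1 x, pd_comm hh 3 2 x, pd_comm hh 4 0 x, pd_comm hh 4 1 x, pd_comm hh 4 2 x, pd_comm hh 4 3 x, pd_comm hh 5 0 x, pd_comm hh 5 1 x, pd_comm hh 5 2 x, pd_comm hh 5 3 x, pd_comm hh 5 4 x]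
  ring

lemma pd_pbSum_5 {g h : (Fin 6 → ℝ) → ℝ} (hg : ContDiff ℝ (⊤ : ℕ∞) g) (hh : ContDiff ℝ (⊤ : ℕ∞) h)
    (x : Fin 6 → ℝ) :
    pd 5 (pbSum g h) x =
        (1 - x 0) * (pd 0 (pd 5 g) x * pd 3 h x + pd 0 g x * pd 3 (pd 5 h) x)
        + 1 * (pd 0 (pd 5 g) x * pd 4 h x + pd 0 g x * pd 4 (pd 5 h) x)
        + (-(2 * x 1)) * (pd 1 (pd 5 g) x * pd 3 h x + pd 1 g x * pd 3 (pd 5 h) x)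
        + (1 - x 0) * (pd 1 (pd 5 g) x * pd 4 h x + pd 1 g x * pd 4 (pd 5 h) x)
        + (-(x 2)) * (pd 1 (pd 5 g) x * pd 5 h x + pd 1 g x * pd 5 (pd 5 h) x)
        + (-(x 2)) * (pd 2 (pd 5 g) x * pd 3 h x + pd 2 g x * pd 3 (pd 5 h) x)
        + 1 * (pd 2 (pd 5 g) x * pd 5 h x + pd 2 g x * pd 5 (pd 5 h) x)
        + (x 0 - 1) * (pd 3 (pd 5 g) x * pd 0 h x + pd 3 g x * pd 0 (pd 5 h) x)
        + (2 * x 1) * (pd 3 (pd 5 g) x * pd 1 h x + pd 3 g x * pd 1 (pd 5 h) x)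
        + (x 2) * (pd 3 (pd 5 g) x * pd 2 h x + pd 3 g x * pd 2 (pd 5 h) x)
        + (-(x 4)) * (pd 3 (pd 5 g) x * pd 4 h x + pd 3 g x * pd 4 (pd 5 h) x)
        + (-1) * pd 3 g x * pd 5 h x
        + (-(x 5)) * (pd 3 (pd 5 g) x * pd 5 h x + pd 3 g x * pd 5 (pd 5 h) x)
        + (-1) * (pd 4 (pd 5 g) x * pd 0 h x + pd 4 g x * pd 0 (pd 5 h) x)
        + (x 0 - 1) * (pd 4 (pd 5 g) x * pd 1 h x + pd 4 g x * pd 1 (pd 5 h) x)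
        + (x 4) * (pd 4 (pd 5 g) x * pd 3 h x + pd 4 g x * pd 3 (pd 5 h) x)
        + (x 2) * (pd 5 (pd 5 g) x * pd 1 h x + pd 5 g x * pd 1 (pd 5 h) x)
        + (-1) * (pd 5 (pd 5 g) x * pd 2 h x + pd 5 g x * pd 2 (pd 5 h) x)
        + (1) * pd 5 g x * pd 3 h x
        + (x 5) * (pd 5 (pd 5 g) x * pd 3 h x + pd 5 g x * pd 3 (pd 5 h) x) := by
  rw [pd_pbSum hg hh 5 x]
  simp only [show ((5:Fin 6) = 0) = False from eq_false (by decide), show ((5:Fin 6) = 1) = False from eq_false (by decide), show ((5:Fin 6) = 2) = False from eq_false (by decide), show ((5:Fin 6) = 4) = False from eq_false (by decide), show ((5:Fin 6) = 5) = True from eq_true rfl, if_true, if_false]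
  try simp only [pd_comm hg 1 0 x, pd_comm hg 2 0 x, pd_comm hg 2 1 x, pd_comm hg 3 0 x, pd_comm hg 3 1 x, pd_comm hg 3 2 x, pd_comm hg 4 0 x, pd_comm hg 4 1 x, pd_comm hg 4 2 x, pd_comm hg 4 3 x, pd_comm hg 5 0 x, pd_comm hg 5 1 x, pd_comm hg 5 2 x, pd_comm hg 5 3 x, pd_comm hg 5 4 x, pd_comm hh 1 0 x, pd_comm hh 2 0 x, pd_comm hh 2 1 x, pd_comm hh 3 0 x, pd_comm hh 3 1 x, pd_comm hh 3 2 x, pd_comm hh 4 0 x, pd_comm hh 4 1 x, pd_comm hh 4 2 x, pd_comm hh 4 3 x, pd_comm hh 5 0 x, pd_comm hh 5 1 x, pd_comm hh 5 2 x, pd_comm hh 5 3 x, pd_comm hh 5 4 x]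
  ring


theorem henon_heiles_3dof_P0_P1_compatible :
    ∀ f g h : (Fin 6 → ℝ) → ℝ, ContDiff ℝ (⊤ : ℕ∞) f → ContDiff ℝ (⊤ : ℕ∞) g → ContDiff ℝ (⊤ : ℕ∞) h →
      ∀ x : Fin 6 → ℝ,
        pbSum f (pbSum g h) x + pbSum g (pbSum h f) x + pbSum h (pbSum f g) x = 0 := by
  intro f g h hf hg hh x
  rw [pbSum_eq f (pbSum g h) x, pbSum_eq g (pbSum h f) x, pbSum_eq h (pbSum f g) x]
  simp only [pd_pbSum_0 hg hh, pd_pbSum_0 hh hf, pd_pbSum_0 hf hg, pd_pbSum_1 hg hh, pd_pbSum_1 hh hf, pd_pbSum_1 hf hg, pd_pbSum_2 hg hh, pd_pbSum_2 hh hf, pd_pbSum_2 hf hg, pd_pbSum_3 hg hh, pd_pbSum_3 hh hf, pd_pbSum_3 hf hg, pd_pbSum_4 hg hh, pd_pbSum_4 hh hf, pd_pbSum_4 hf hg, pd_pbSum_5 hg hh, pd_pbSum_5 hh hf, pd_pbSum_5 hf hg]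
  ring

end
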